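/- arXiv:2203.14897 — 6 statements merged into one kernel-verified Lean document; each statement's English description precedes it below -/
import Mathlib

section
/- Symmetry (i) of the perturbed system: if c(t) = (x(t), z(t)) is a solution of the perturbed Rayleigh–Bénard system, then for any integers a, b the curve t ↦ (x(−t + bT) + 2aπ/k, 1 − z(−t + bT)) is also a solution of the perturbed Rayleigh–Bénard system. -/
/-- A solution of the perturbed Rayleigh–Bénard system with parameters `A, k, ε, ω`. -/
def IsPerturbedRBSolution (A k ε ω : ℝ) (x z : ℝ → ℝ) : Prop :=
  (∀ t : ℝ, HasDerivAt x
    (-(A * Real.pi / k) * Real.sin (k * x t) * Real.cos (Real.pi * z t)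
      - ε * A * Real.pi * Real.cos (ω * t) * Real.cos (k * x t) * Real.cos (Real.pi * z t)) t)
  ∧ (∀ t : ℝ, HasDerivAt z
    (A * Real.cos (k * x t) * Real.sin (Real.pi * z t)
      - ε * A * k * Real.cos (ω * t) * Real.sin (k * x t) * Real.sin (Real.pi * z t)) t)

/-- Symmetry (i): `x ↦ x + 2aπ/k`, `z ↦ 1 − z`, `t ↦ −t + bT` maps solutions to solutions. -/
theorem perturbedRB_symmetry_i (A k ε T ω : ℝ)
    (hA : 0 < A) (hk : 0 < k) (hT : 0 < T) (hω : ω = 2 * Real.pi / T)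
    (x z : ℝ → ℝ) (hsol : IsPerturbedRBSolution A k ε ω x z) (a b : ℤ) :
    IsPerturbedRBSolution A k ε ω
      (fun t => x (-t + (b : ℝ) * T) + 2 * (a : ℝ) * Real.pi / k)
      (fun t => 1 - z (-t + (b : ℝ) * T)) := by
  obtain ⟨hx, hz⟩ := hsol
  have hk' : k ≠ 0 := ne_of_gt hk
  have hωT : ω * T = 2 * Real.pi := by
    rw [hω]; field_simp
  constructor
  · intro t
    set s : ℝ := -t + (b : ℝ) * T with hs
    have hst : HasDerivAt (fun t : ℝ => -t + (b : ℝ) * T) (-1) t := by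
      simpa using ((hasDerivAt_id t).neg.add_const ((b : ℝ) * T))
    have h2 := ((hx s).comp t hst).add_const (2 * (a : ℝ) * Real.pi / k)
    refine h2.congr_deriv ?_
    beta_reduce
    have e1 : k * (x s + 2 * (a : ℝ) * Real.pi / k) = k * x s + (a : ℝ) * (2 * Real.pi) := by
      field_simp
    have e2 : Real.pi * (1 - z s) = Real.pi - Real.pi * z s := by ring
    have e3 : Real.cos (ω * t) = Real.cos (ω * s) := by
      have h : ω * s = -(ω * t) + (b : ℝ) * (2 * Real.pi) := by
        rw [hs, ← hωT]; ring
      rw [h, Real.cos_add_int_mul_two_pi, Real.cos_neg]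
    rw [e1, e2, Real.sin_add_int_mul_two_pi, Real.cos_add_int_mul_two_pi, Real.cos_pi_sub, e3]
    ring
  · intro t
    set s : ℝ := -t + (b : ℝ) * T with hs
    have hst : HasDerivAt (fun t : ℝ => -t + (b : ℝ) * T) (-1) t := by
      simpa using ((hasDerivAt_id t).neg.add_const ((b : ℝ) * T))
    have h2 := ((hz s).comp t hst).const_sub 1
    refine h2.congr_deriv ?_
    beta_reduce
    have e1 : k * (x s + 2 * (a : ℝ) * Real.pi / k) = k * x s + (a : ℝ) * (2 * Real.pi) := by
      field_simp
    have e2 : Real.pi * (1 - z s) = Real.pi - Real.pi * z s := by ring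
    have e3 : Real.cos (ω * t) = Real.cos (ω * s) := by
      have h : ω * s = -(ω * t) + (b : ℝ) * (2 * Real.pi) := by
        rw [hs, ← hωT]; ring
      rw [h, Real.cos_add_int_mul_two_pi, Real.cos_neg]
    rw [e1, e2, Real.sin_add_int_mul_two_pi, Real.cos_add_int_mul_two_pi,
      Real.sin_pi_sub, e3]
    ring
end

section
/- Symmetry (ii) of the perturbed system: if c(t) = (x(t), z(t)) is a solution of the perturbed Rayleigh–Bénard system, then for any integers a, b the curve t ↦ (x(−t + bT) + (2a+1)π/k, z(−t + bT)) is also a solution of the perturbed Rayleigh–Bénard system. -/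
lemma sin_shift_odd (θ : ℝ) (a : ℤ) : Real.sin (θ + (2 * (a : ℝ) + 1) * Real.pi) = -Real.sin θ := by
  have : θ + (2 * (a : ℝ) + 1) * Real.pi = (θ + Real.pi) + (a : ℤ) * (2 * Real.pi) := by
    ring
  rw [this, Real.sin_add_int_mul_two_pi, Real.sin_add_pi]

lemma cos_shift_odd (θ : ℝ) (a : ℤ) : Real.cos (θ + (2 * (a : ℝ) + 1) * Real.pi) = -Real.cos θ := by
  have : θ + (2 * (a : ℝ) + 1) * Real.pi = (θ + Real.pi) + (a : ℤ) * (2 * Real.pi) := by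
    ring
  rw [this, Real.cos_add_int_mul_two_pi, Real.cos_add_pi]

/-- Symmetry (ii): `x ↦ x + (2a+1)π/k`, `z ↦ z`, `t ↦ −t + bT` maps solutions to solutions. -/
theorem perturbedRB_symmetry_ii (A k ε T ω : ℝ)
    (hA : 0 < A) (hk : 0 < k) (hT : 0 < T) (hω : ω = 2 * Real.pi / T)
    (x z : ℝ → ℝ) (hsol : IsPerturbedRBSolution A k ε ω x z) (a b : ℤ) :
    IsPerturbedRBSolution A k ε ω
      (fun t => x (-t + (b : ℝ) * T) + (2 * (a : ℝ) + 1) * Real.pi / k)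
      (fun t => z (-t + (b : ℝ) * T)) := by
  obtain ⟨hx, hz⟩ := hsol
  have hk' : k ≠ 0 := ne_of_gt hk
  have hT' : T ≠ 0 := ne_of_gt hT
  -- time reparametrization derivative
  have htime : ∀ t : ℝ, HasDerivAt (fun t : ℝ => -t + (b : ℝ) * T) (-1) t := by
    intro t
    simpa using ((hasDerivAt_id t).neg.add_const ((b : ℝ) * T))
  have hcos : ∀ t : ℝ, Real.cos (ω * (-t + (b : ℝ) * T)) = Real.cos (ω * t) := by
    intro t
    have : ω * (-t + (b : ℝ) * T) = -(ω * t) + (b : ℤ) * (2 * Real.pi) := by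
      rw [hω]; field_simp
    rw [this, Real.cos_add_int_mul_two_pi, Real.cos_neg]
  have hkx : ∀ s : ℝ, k * (x s + (2 * (a : ℝ) + 1) * Real.pi / k)
      = k * x s + (2 * (a : ℝ) + 1) * Real.pi := by
    intro s; field_simp
  constructor
  · intro t
    set s := -t + (b : ℝ) * T with hs
    have h1 := ((hx s).comp t (htime t)).add_const ((2 * (a : ℝ) + 1) * Real.pi / k)
    refine h1.congr_deriv ?_
    simp only [hkx, sin_shift_odd, cos_shift_odd, hcos, ← hs]
    rw [hs, hcos]
    ring
  · intro t
    set s := -t + (b : ℝ) * T with hs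
    have h1 := (hz s).comp t (htime t)
    refine h1.congr_deriv ?_
    simp only [hkx, sin_shift_odd, cos_shift_odd, hcos, ← hs]
    rw [hs, hcos]
    ring
end

section
/- Symmetry (iv) of the perturbed system: if c(t) = (x(t), z(t)) is a solution of the perturbed Rayleigh–Bénard system, then for any integers a, b the curve t ↦ (−x(−t + (b + 1/2)T) + (2a+1)π/k, z(−t + (b + 1/2)T)) is also a solution of the perturbed Rayleigh–Bénard system. -/
/-- Symmetry (iv): `x ↦ −x + (2a+1)π/k`, `z ↦ z`, `t ↦ −t + (b + 1/2)T`
maps solutions to solutions. -/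
theorem perturbedRB_symmetry_iv (A k ε T ω : ℝ)
    (hA : 0 < A) (hk : 0 < k) (hT : 0 < T) (hω : ω = 2 * Real.pi / T)
    (x z : ℝ → ℝ) (hsol : IsPerturbedRBSolution A k ε ω x z) (a b : ℤ) :
    IsPerturbedRBSolution A k ε ω
      (fun t => -x (-t + ((b : ℝ) + 1 / 2) * T) + (2 * (a : ℝ) + 1) * Real.pi / k)
      (fun t => z (-t + ((b : ℝ) + 1 / 2) * T)) := by
  obtain ⟨hx, hz⟩ := hsol
  have hk' : k ≠ 0 := ne_of_gt hk
  have hT' : T ≠ 0 := ne_of_gt hT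
  have hinner : ∀ t : ℝ, HasDerivAt (fun t : ℝ => -t + ((b : ℝ) + 1 / 2) * T) (-1) t := by
    intro t
    simpa using ((hasDerivAt_id t).neg.add_const (((b : ℝ) + 1 / 2) * T))
  have hsin : ∀ u : ℝ,
      Real.sin (k * (-x u + (2 * (a : ℝ) + 1) * Real.pi / k)) = Real.sin (k * x u) := by
    intro u
    have : k * (-x u + (2 * (a : ℝ) + 1) * Real.pi / k)
        = (Real.pi - k * x u) + (a : ℝ) * (2 * Real.pi) := by
      field_simp; ring
    rw [this, Real.sin_add_int_mul_two_pi, Real.sin_pi_sub]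
  have hcos : ∀ u : ℝ,
      Real.cos (k * (-x u + (2 * (a : ℝ) + 1) * Real.pi / k)) = -Real.cos (k * x u) := by
    intro u
    have : k * (-x u + (2 * (a : ℝ) + 1) * Real.pi / k)
        = (Real.pi - k * x u) + (a : ℝ) * (2 * Real.pi) := by
      field_simp; ring
    rw [this, Real.cos_add_int_mul_two_pi, Real.cos_pi_sub]
  have hcosω : ∀ t : ℝ,
      Real.cos (ω * (-t + ((b : ℝ) + 1 / 2) * T)) = -Real.cos (ω * t) := by
    intro t
    have : ω * (-t + ((b : ℝ) + 1 / 2) * T)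
        = (Real.pi - ω * t) + (b : ℝ) * (2 * Real.pi) := by
      rw [hω]; field_simp; ring
    rw [this, Real.cos_add_int_mul_two_pi, Real.cos_pi_sub]
  constructor
  · intro t
    have h := ((hx (-t + ((b : ℝ) + 1 / 2) * T)).comp t (hinner t)).neg.add_const
      ((2 * (a : ℝ) + 1) * Real.pi / k)
    refine h.congr_deriv ?_
    rw [hsin, hcos, hcosω]
    ring
  · intro t
    have h := (hz (-t + ((b : ℝ) + 1 / 2) * T)).comp t (hinner t)
    refine h.congr_deriv ?_
    rw [hsin, hcos, hcosω]
    ring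
end

section
/- Symmetry (v) of the perturbed system: if c(t) = (x(t), z(t)) is a solution of the perturbed Rayleigh–Bénard system, then for any integers a, b the curve t ↦ (−x(t + (b + 1/2)T) + (2a+1)π/k, 1 − z(t + (b + 1/2)T)) is also a solution of the perturbed Rayleigh–Bénard system. -/
private lemma sin_odd_sub (n : ℤ) (θ : ℝ) :
    Real.sin ((2 * (n : ℝ) + 1) * Real.pi - θ) = Real.sin θ := by
  rw [show (2 * (n : ℝ) + 1) * Real.pi - θ = (Real.pi - θ) + n * (2 * Real.pi) by ring,
    Real.sin_add_int_mul_two_pi, Real.sin_pi_sub]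

private lemma cos_odd_sub (n : ℤ) (θ : ℝ) :
    Real.cos ((2 * (n : ℝ) + 1) * Real.pi - θ) = -Real.cos θ := by
  rw [show (2 * (n : ℝ) + 1) * Real.pi - θ = (Real.pi - θ) + n * (2 * Real.pi) by ring,
    Real.cos_add_int_mul_two_pi, Real.cos_pi_sub]

private lemma cos_add_odd (n : ℤ) (θ : ℝ) :
    Real.cos (θ + (2 * (n : ℝ) + 1) * Real.pi) = -Real.cos θ := by
  rw [show θ + (2 * (n : ℝ) + 1) * Real.pi = (θ + Real.pi) + n * (2 * Real.pi) by ring,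
    Real.cos_add_int_mul_two_pi, Real.cos_add_pi]

/-- Symmetry (v): `x ↦ −x + (2a+1)π/k`, `z ↦ 1 − z`, `t ↦ t + (b + 1/2)T`
maps solutions to solutions. -/
theorem perturbedRB_symmetry_v (A k ε T ω : ℝ)
    (hA : 0 < A) (hk : 0 < k) (hT : 0 < T) (hω : ω = 2 * Real.pi / T)
    (x z : ℝ → ℝ) (hsol : IsPerturbedRBSolution A k ε ω x z) (a b : ℤ) :
    IsPerturbedRBSolution A k ε ω
      (fun t => -x (t + ((b : ℝ) + 1 / 2) * T) + (2 * (a : ℝ) + 1) * Real.pi / k)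
      (fun t => 1 - z (t + ((b : ℝ) + 1 / 2) * T)) := by
  obtain ⟨hx, hz⟩ := hsol
  set c : ℝ := ((b : ℝ) + 1 / 2) * T with hc
  have hk0 : k ≠ 0 := ne_of_gt hk
  have hT0 : T ≠ 0 := ne_of_gt hT
  -- key pointwise rewrites
  have hkX : ∀ t : ℝ, k * (-x (t + c) + (2 * (a : ℝ) + 1) * Real.pi / k)
      = (2 * (a : ℝ) + 1) * Real.pi - k * x (t + c) := by
    intro t; field_simp; ring
  have hpZ : ∀ t : ℝ, Real.pi * (1 - z (t + c)) = Real.pi - Real.pi * z (t + c) := by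
    intro t; ring
  have hωc : ∀ t : ℝ, ω * (t + c) = ω * t + (2 * (b : ℝ) + 1) * Real.pi := by
    intro t
    rw [hω, hc]
    field_simp
  constructor
  · intro t
    have hshift : HasDerivAt (fun t : ℝ => t + c) 1 t := (hasDerivAt_id t).add_const c
    have h1 := ((hx (t + c)).comp t hshift).neg.add_const ((2 * (a : ℝ) + 1) * Real.pi / k)
    convert h1 using 1
    case e'_4 => rfl
    case e'_5 => rfl
    case e'_8 => rfl
    simp only [hkX, hpZ, hωc, sin_odd_sub, cos_odd_sub, Real.sin_pi_sub, Real.cos_pi_sub,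
      cos_add_odd]
    ring
  · intro t
    have hshift : HasDerivAt (fun t : ℝ => t + c) 1 t := (hasDerivAt_id t).add_const c
    have h1 := (((hz (t + c)).comp t hshift).neg).const_add 1
    convert h1 using 1
    case e'_4 => rfl
    case e'_5 => rfl
    case e'_8 => rfl
    simp only [hkX, hpZ, hωc, sin_odd_sub, cos_odd_sub, Real.sin_pi_sub, Real.cos_pi_sub,
      cos_add_odd]
    ring
end

section
/- A point-symmetric loop has odd winding number about its center of symmetry: let P > 0, let w_c ∈ ℂ, and let γ : ℝ → ℂ be a continuously differentiable P-periodic curve with γ(t) ≠ w_c for all t, satisfying the point symmetry γ(t + P/2) − w_c = −(γ(t) − w_c) for all t ∈ ℝ. Then (1/(2πi))·∫₀^{P} γ'(t)/(γ(t) − w_c) dt is an odd integer. -/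
/-- A point-symmetric loop has odd winding number about its center of symmetry:
if `γ` is a continuously differentiable `P`-periodic curve avoiding `w_c` and
satisfying `γ(t + P/2) − w_c = −(γ(t) − w_c)` for all `t`, then the winding number
`(1/(2πi))·∫₀^P γ'(t)/(γ(t) − w_c) dt` is an odd integer. -/
theorem pointSymmetric_loop_odd_winding (P : ℝ) (hP : 0 < P) (w_c : ℂ)
    (γ : ℝ → ℂ) (hγ : ContDiff ℝ 1 γ)
    (hper : ∀ t : ℝ, γ (t + P) = γ t)
    (havoid : ∀ t : ℝ, γ t ≠ w_c)
    (hsym : ∀ t : ℝ, γ (t + P / 2) - w_c = -(γ t - w_c)) :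
    ∃ n : ℤ, Odd n ∧
      (n : ℂ) = (1 / (2 * Real.pi * Complex.I)) *
        ∫ t in (0 : ℝ)..P, deriv γ t / (γ t - w_c) := by
  set g : ℝ → ℂ := fun t => deriv γ t / (γ t - w_c) with hg
  have hd : Differentiable ℝ γ := hγ.differentiable one_ne_zero
  have hdc : Continuous (deriv γ) := hγ.continuous_deriv le_rfl
  have hsub : ∀ t, γ t - w_c ≠ 0 := fun t => sub_ne_zero.mpr (havoid t)
  have hgc : Continuous g := hdc.div (hγ.continuous.sub continuous_const) hsub
  set F : ℝ → ℂ := fun t => ∫ s in (0:ℝ)..t, g s with hF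
  have hFd : ∀ t, HasDerivAt F (g t) t := fun t =>
    (hgc.integral_hasStrictDerivAt 0 t).hasDerivAt
  have key : ∀ t, (γ t - w_c) * Complex.exp (-F t) = γ 0 - w_c := by
    have hder : ∀ t, HasDerivAt (fun t => (γ t - w_c) * Complex.exp (-F t)) 0 t := by
      intro t
      have h1 : HasDerivAt (fun t => γ t - w_c) (deriv γ t) t :=
        ((hd t).hasDerivAt).sub_const w_c
      have h2 : HasDerivAt (fun t => Complex.exp (-F t))
          (Complex.exp (-F t) * (-(g t))) t := ((hFd t).neg).cexp
      have h3 : HasDerivAt (fun t => (γ t - w_c) * Complex.exp (-F t)) _ t := h1.mul h2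
      convert h3 using 1
      rw [hg]
      field_simp [hsub t]
      ring
    intro t
    have hcon := is_const_of_deriv_eq_zero
      (fun x => ((hder x).differentiableAt : DifferentiableAt ℝ _ x))
      (fun x => (hder x).deriv) t 0
    simpa [hF, intervalIntegral.integral_same] using hcon
  have hF0 : Complex.exp (-F (P/2)) = -1 := by
    have h1 := key (P/2)
    have h2 : γ (P/2) - w_c = -(γ 0 - w_c) := by simpa using hsym 0
    rw [h2] at h1
    have h3 : (γ 0 - w_c) * (Complex.exp (-F (P/2)) + 1) = 0 := by
      linear_combination -h1
    have h4 := (mul_eq_zero.mp h3).resolve_left (hsub 0)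
    linear_combination h4
  have hFhalf : Complex.exp (F (P/2)) = -1 := by
    have hme : Complex.exp (F (P/2)) * Complex.exp (-F (P/2)) = 1 := by
      rw [← Complex.exp_add]; simp
    rw [hF0] at hme
    linear_combination -hme
  obtain ⟨k, hk⟩ : ∃ k : ℤ, F (P/2) = (2*k+1) * (Real.pi * Complex.I) := by
    have h1 : Complex.exp (F (P/2) - Real.pi * Complex.I) = 1 := by
      rw [Complex.exp_sub, hFhalf, Complex.exp_pi_mul_I]
      norm_num
    obtain ⟨n, hn⟩ := Complex.exp_eq_one_iff.mp h1
    refine ⟨n, ?_⟩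
    have : F (P/2) = Real.pi * Complex.I + n * (2 * Real.pi * Complex.I) := by
      linear_combination hn
    rw [this]; ring
  -- periodicity of g with period P/2
  have hgp : ∀ t, g (t + P/2) = g t := by
    intro t
    have hfun : (fun s : ℝ => γ (s + P/2)) = fun s => 2*w_c - γ s := by
      funext s
      linear_combination hsym s
    have hR : HasDerivAt (fun s : ℝ => 2*w_c - γ s) (-(deriv γ t)) t :=
      ((hd t).hasDerivAt).const_sub (2*w_c)
    have e1 : deriv (fun s : ℝ => γ (s + P/2)) t = deriv γ (t + P/2) := by
      simpa using deriv_comp_add_const γ (P/2) t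
    have e2 : deriv (fun s : ℝ => γ (s + P/2)) t = -(deriv γ t) := by
      rw [hfun]; exact hR.deriv
    have hderiv : deriv γ (t + P/2) = -(deriv γ t) := e1.symm.trans e2
    have hval : γ (t + P/2) - w_c = -(γ t - w_c) := hsym t
    rw [hg]
    simp only [hderiv, hval, neg_div_neg_eq]
  have hint : (∫ t in (0:ℝ)..P, g t) = 2 * F (P/2) := by
    have hi1 : IntervalIntegrable g MeasureTheory.volume 0 (P/2) :=
      hgc.intervalIntegrable _ _
    have hi2 : IntervalIntegrable g MeasureTheory.volume (P/2) P :=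
      hgc.intervalIntegrable _ _
    have hsplit := intervalIntegral.integral_add_adjacent_intervals hi1 hi2
    have hshift : (∫ t in (P/2 : ℝ)..P, g t) = ∫ t in (0:ℝ)..(P/2), g (t + P/2) := by
      rw [intervalIntegral.integral_comp_add_right g (P/2)]
      norm_num
    have hsame : (∫ t in (0:ℝ)..(P/2), g (t + P/2)) = ∫ t in (0:ℝ)..(P/2), g t := by
      simp only [hgp]
    rw [← hsplit, hshift, hsame, hF]
    ring
  refine ⟨2*k+1, ⟨k, by ring⟩, ?_⟩
  rw [hint, hk]
  have hpi : (Real.pi : ℂ) ≠ 0 := by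
    exact_mod_cast Real.pi_ne_zero
  field_simp
  push_cast
  ring
end

section
/- Crossing points of a doubly symmetric resonant orbit: let c(t) = (x(t), z(t)) be a continuously differentiable mT-periodic solution of the perturbed Rayleigh–Bénard system whose minimal period among the multiples of T is mT, fix an integer a, and suppose the trajectory C = {c(t) : t ∈ ℝ} is invariant under both reflections (x,z) ↦ ((2a+1)π/k − x, z) and (x,z) ↦ (x, 1 − z), and avoids the cell center ((2a+1)π/(2k), 1/2). Then there exist times t₃, t₄ ∈ [0, mT) with t₃ ≠ t₄ such that z(t₃) = z(t₄) = 1/2 and x(t₃) + x(t₄) = (2a+1)π/k; that is, the orbit crosses the horizontal center line z = 1/2 at two points that are reflections of each other through the vertical center line x = (2a+1)π/(2k). -/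
/-!
The horizontal reflection sends `c(0)` to a point of the orbit at height `1 - z(0)`, so by the
intermediate value theorem the orbit meets the line `z = 1/2` at some `c(t₁)`. The vertical
reflection of `c(t₁)` is again on the orbit; the two points differ because the orbit avoids the
cell center, and periodicity moves both times into `[0, mT)`.
-/

open Set

theorem exists_apply_eq_of_image_range_eq {α β : Type*} {γ : α → β} {g : β → β}
    (hsym : g '' range γ = range γ) (t : α) : ∃ s, γ s = g (γ t) :=
  hsym.subset (mem_image_of_mem g (mem_range_self t))

theorem exists_snd_eq_half_of_image_range_eq {γ : ℝ → ℝ × ℝ}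
    (hγ : Continuous fun t => (γ t).2)
    (hsym : (fun p : ℝ × ℝ => (p.1, 1 - p.2)) '' range γ = range γ) :
    ∃ t, (γ t).2 = 1 / 2 := by
  obtain ⟨s, hs⟩ := exists_apply_eq_of_image_range_eq hsym 0
  have hzs : (γ s).2 = 1 - (γ 0).2 := congrArg Prod.snd hs
  rcases le_total (γ 0).2 (1 / 2) with h | h
  · exact mem_range_of_exists_le_of_exists_ge hγ ⟨0, h⟩ ⟨s, by linarith⟩
  · exact mem_range_of_exists_le_of_exists_ge hγ ⟨s, by linarith⟩ ⟨0, h⟩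

theorem perturbedRB_crossing_points_general (k T : ℝ)
    (hT : 0 < T)
    (x z : ℝ → ℝ)
    (hC1z : ContDiff ℝ 1 z)
    (m : ℕ) (hm : 1 ≤ m)
    (hper : ∀ t : ℝ, x (t + (m : ℝ) * T) = x t ∧ z (t + (m : ℝ) * T) = z t)
    (a : ℤ)
    (hsymV : (fun p : ℝ × ℝ => ((2 * (a : ℝ) + 1) * Real.pi / k - p.1, p.2)) ''
        Set.range (fun t => (x t, z t)) = Set.range (fun t => (x t, z t)))
    (hsymH : (fun p : ℝ × ℝ => (p.1, 1 - p.2)) ''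
        Set.range (fun t => (x t, z t)) = Set.range (fun t => (x t, z t)))
    (hcenter : ∀ t : ℝ,
      (x t, z t) ≠ ((2 * (a : ℝ) + 1) * Real.pi / (2 * k), 1 / 2)) :
    ∃ t₃ t₄ : ℝ, t₃ ∈ Set.Ico (0 : ℝ) ((m : ℝ) * T) ∧ t₄ ∈ Set.Ico (0 : ℝ) ((m : ℝ) * T)
      ∧ t₃ ≠ t₄ ∧ z t₃ = 1 / 2 ∧ z t₄ = 1 / 2
      ∧ x t₃ + x t₄ = (2 * (a : ℝ) + 1) * Real.pi / k := by
  have hmT : 0 < (m : ℝ) * T := mul_pos (by exact_mod_cast hm) hT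
  have hγ : Function.Periodic (fun t => (x t, z t)) ((m : ℝ) * T) := fun t =>
    Prod.ext (hper t).1 (hper t).2
  obtain ⟨t₁, hz₁ : z t₁ = 1 / 2⟩ := exists_snd_eq_half_of_image_range_eq hC1z.continuous hsymH
  obtain ⟨s₁, hs₁⟩ := exists_apply_eq_of_image_range_eq hsymV t₁
  obtain ⟨t₃, ht₃, h₃⟩ := hγ.exists_mem_Ico₀ hmT t₁
  obtain ⟨t₄, ht₄, h₄⟩ := hγ.exists_mem_Ico₀ hmT s₁
  simp only [Prod.ext_iff] at hs₁ h₃ h₄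
  refine ⟨t₃, t₄, ht₃, ht₄, ?_, by rw [← h₃.2, hz₁], by rw [← h₄.2, hs₁.2, hz₁], ?_⟩
  · rintro rfl
    have hx₁ : x t₁ = (2 * (a : ℝ) + 1) * Real.pi / (2 * k) := by
      rw [mul_comm 2 k, ← div_div]
      linarith [h₃.1, h₄.1, hs₁.1]
    exact hcenter t₁ (Prod.ext hx₁ hz₁)
  · rw [← h₃.1, ← h₄.1, hs₁.1]
    ring

/-- Crossing points of a doubly symmetric resonant orbit: a continuously
differentiable `mT`-periodic solution whose trajectory is invariant under both
reflections through the center lines of the cell and avoids the cell center crosses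
the horizontal center line `z = 1/2` at two distinct times in `[0, mT)`, at points
that are reflections of each other through the vertical center line
`x = (2a+1)π/(2k)`. -/
theorem perturbedRB_crossing_points (A k ε T ω : ℝ)
    (hA : 0 < A) (hk : 0 < k) (hT : 0 < T) (hω : ω = 2 * Real.pi / T)
    (x z : ℝ → ℝ)
    (hC1x : ContDiff ℝ 1 x) (hC1z : ContDiff ℝ 1 z)
    (hsol : IsPerturbedRBSolution A k ε ω x z)
    (m : ℕ) (hm : 1 ≤ m)
    (hper : ∀ t : ℝ, x (t + (m : ℝ) * T) = x t ∧ z (t + (m : ℝ) * T) = z t)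
    (hmin : ∀ l : ℕ, 1 ≤ l → l ≤ m - 1 →
      (x ((l : ℝ) * T), z ((l : ℝ) * T)) ≠ (x 0, z 0))
    (a : ℤ)
    (hsymV : (fun p : ℝ × ℝ => ((2 * (a : ℝ) + 1) * Real.pi / k - p.1, p.2)) ''
        Set.range (fun t => (x t, z t)) = Set.range (fun t => (x t, z t)))
    (hsymH : (fun p : ℝ × ℝ => (p.1, 1 - p.2)) ''
        Set.range (fun t => (x t, z t)) = Set.range (fun t => (x t, z t)))
    (hcenter : ∀ t : ℝ,
      (x t, z t) ≠ ((2 * (a : ℝ) + 1) * Real.pi / (2 * k), 1 / 2)) :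
    ∃ t₃ t₄ : ℝ, t₃ ∈ Set.Ico (0 : ℝ) ((m : ℝ) * T) ∧ t₄ ∈ Set.Ico (0 : ℝ) ((m : ℝ) * T)
      ∧ t₃ ≠ t₄ ∧ z t₃ = 1 / 2 ∧ z t₄ = 1 / 2
      ∧ x t₃ + x t₄ = (2 * (a : ℝ) + 1) * Real.pi / k :=
  perturbedRB_crossing_points_general k T hT x z hC1z m hm hper a hsymV hsymH hcenter
end
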